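/- Let α ∈ ℝ and set δ := −α/2. Let v : ℝ → 𝒮(ℝ;ℂ) be a continuously differentiable curve in the Schwartz space, written v(t,x), solving for all (t,x): i∂ₜv + ∂ₓ²v − α v² ∂ₓ(v*) − (α²/2) v³ (v*)² = 0, where v*(t,x) := conj(v(t,−x)). Define u(t,x) := v(t,x)·exp(δ·∂ₓ⁻¹(v(t,·) v*(t,·))(x)). Then u solves the nonlocal derivative NLS: for all (t,x), i∂ₜu + ∂ₓ²u + α u u* ∂ₓu = 0, where u*(t,x) := conj(u(t,−x)). -/

import Mathlib

/-!
Write `G = v v*`, `P = ∂ₓ⁻¹ G` and `E = exp (δ P)`, so that `u = v E`. Since `G* = G`, the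
primitive satisfies `conj (P (-x)) = -P x`, hence `u* = v* E⁻¹` and `u u* = G`; the
`x`-derivatives of `u` follow from `∂ₓ P = G`. In time, Schwartz decay that is uniform on compact
time intervals lets us differentiate under the integral, so `∂ₜ P = ∂ₓ⁻¹ (∂ₜ G)`. The equation
for `v` and its `*`-image give `i ∂ₜ G = ∂ₓ H` with the Schwartz function
`H = v ∂ₓv* − v* ∂ₓv + (α/2) G²`, hence `i ∂ₜ P = H`. Substituting everything into the
NdNLS, the choice `δ = −α/2` makes all the terms cancel.
-/

open MeasureTheory

/-- The antiderivative `∂ₓ⁻¹ f (x) = ½(∫_{-∞}^x f − ∫_x^∞ f)`. -/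
noncomputable def pinv (f : ℝ → ℂ) (x : ℝ) : ℂ :=
  (1 / 2 : ℂ) * ((∫ y in Set.Iic x, f y) - ∫ y in Set.Ici x, f y)

open Filter Topology ComplexConjugate
open scoped SchwartzMap

section pinv

variable {f : ℝ → ℂ}

theorem pinv_const_mul (c : ℂ) (x : ℝ) :
    pinv (fun y => c * f y) x = c * pinv f x := by
  simp only [pinv, integral_const_mul]
  ring

theorem pinv_sub_pinv (hf : Integrable f) (a b : ℝ) :
    pinv f b - pinv f a = ∫ y in a..b, f y := by
  have hIic := intervalIntegral.integral_Iic_sub_Iic (a := a) (b := b) hf.integrableOn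
    hf.integrableOn
  have hIoi := intervalIntegral.integral_Ioi_sub_Ioi' (a := a) (b := b) hf.integrableOn
    hf.integrableOn
  simp only [pinv, integral_Ici_eq_integral_Ioi]
  linear_combination (1 / 2 : ℂ) * hIic + (1 / 2 : ℂ) * hIoi

theorem hasDerivAt_pinv (hf : Integrable f) (hc : Continuous f) (x : ℝ) :
    HasDerivAt (pinv f) (f x) x := by
  have h : pinv f = fun z => pinv f 0 + ∫ y in (0 : ℝ)..z, f y :=
    funext fun z => by rw [← pinv_sub_pinv hf]; ring
  rw [h]
  exact (intervalIntegral.integral_hasDerivAt_right hf.intervalIntegrable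
    (hc.stronglyMeasurableAtFilter _ _) hc.continuousAt).const_add _

theorem pinv_eq_of_hasDerivAt {H : ℝ → ℂ} (hd : ∀ y, HasDerivAt H (f y) y) (hf : Integrable f)
    (hbot : Tendsto H atBot (𝓝 0)) (htop : Tendsto H atTop (𝓝 0)) (x : ℝ) :
    pinv f x = H x := by
  have hIic : ∫ y in Set.Iic x, f y = H x - 0 :=
    integral_Iic_of_hasDerivAt_of_tendsto' (fun y _ => hd y) hf.integrableOn hbot
  have hIoi : ∫ y in Set.Ioi x, f y = 0 - H x :=
    integral_Ioi_of_hasDerivAt_of_tendsto' (fun y _ => hd y) hf.integrableOn htop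
  rw [pinv, integral_Ici_eq_integral_Ioi, hIic, hIoi]
  ring

theorem conj_pinv_neg (hf : ∀ y, conj (f (-y)) = f y) (x : ℝ) :
    conj (pinv f (-x)) = -pinv f x := by
  have hf' : ∀ y, conj (f y) = f (-y) := fun y => by simpa using hf (-y)
  simp only [pinv, map_mul, map_sub, ← integral_conj, hf', integral_comp_neg_Iic,
    integral_Ici_eq_integral_Ioi, integral_comp_neg_Ioi, neg_neg, map_div₀, map_one, map_ofNat]
  ring

end pinv

theorem HasDerivAt.conj_neg {f : ℝ → ℂ} {f' : ℂ} {x : ℝ} (hf : HasDerivAt f f' (-x)) :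
    HasDerivAt (fun y => conj (f (-y))) (-conj f') x := by
  simpa using (hf.scomp x (hasDerivAt_neg x)).star

theorem deriv_conj_neg {f : ℝ → ℂ} {x : ℝ} (hf : DifferentiableAt ℝ f (-x)) :
    deriv (fun y => conj (f (-y))) x = -conj (deriv f (-x)) :=
  hf.hasDerivAt.conj_neg.deriv

theorem norm_mul_le_of_one_add_sq_mul_le {R : Type*} [NormedRing R] {a b : R} {x A B : ℝ}
    (ha : (1 + x ^ 2) * ‖a‖ ≤ A) (hb : (1 + x ^ 2) * ‖b‖ ≤ B) :
    ‖a * b‖ ≤ A * B / (1 + x ^ 2) := by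
  have hx : 1 ≤ 1 + x ^ 2 := le_add_of_nonneg_right (sq_nonneg x)
  have hb' : ‖b‖ ≤ B := (le_mul_of_one_le_left (norm_nonneg b) hx).trans hb
  have hA : 0 ≤ A := (mul_nonneg (by positivity) (norm_nonneg a)).trans ha
  rw [le_div_iff₀ (by positivity)]
  calc ‖a * b‖ * (1 + x ^ 2) ≤ ((1 + x ^ 2) * ‖a‖) * ‖b‖ := by
        rw [mul_comm, mul_assoc]; gcongr; exact norm_mul_le a b
    _ ≤ A * B := mul_le_mul ha hb' (norm_nonneg b) hA

namespace SchwartzMap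

variable {F : Type*} [NormedAddCommGroup F] [NormedSpace ℝ F]

noncomputable def conjNegCLM : 𝓢(ℝ, ℂ) →L[ℝ] 𝓢(ℝ, ℂ) :=
  (postcompCLM Complex.conjCLE.toContinuousLinearMap).comp
    (compCLMOfContinuousLinearEquiv ℝ (ContinuousLinearEquiv.neg ℝ))

@[simp]
theorem conjNegCLM_apply (f : 𝓢(ℝ, ℂ)) (x : ℝ) : conjNegCLM f x = conj (f (-x)) := rfl

noncomputable def mul (f g : 𝓢(ℝ, ℂ)) : 𝓢(ℝ, ℂ) := pairing (ContinuousLinearMap.mul ℝ ℂ) f g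

@[simp]
theorem mul_apply (f g : 𝓢(ℝ, ℂ)) (x : ℝ) : mul f g x = f x * g x := rfl

theorem hasDerivAt_deriv (f : 𝓢(ℝ, F)) (x : ℝ) :
    HasDerivAt (deriv f) (deriv (deriv f) x) x := by
  have h : ⇑(derivCLM ℝ F f) = deriv f := funext (derivCLM_apply ℝ f)
  simpa only [h] using (derivCLM ℝ F f).hasDerivAt x

theorem one_add_sq_mul_norm_le (f : 𝓢(ℝ, F)) (x : ℝ) :
    (1 + x ^ 2) * ‖f x‖ ≤ SchwartzMap.seminorm ℝ 0 0 f + SchwartzMap.seminorm ℝ 2 0 f := by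
  have h2 := norm_pow_mul_le_seminorm ℝ f 2 x
  rw [Real.norm_eq_abs, sq_abs] at h2
  linarith [norm_le_seminorm ℝ f x]

theorem exists_one_add_sq_mul_norm_le {X : Type*} [TopologicalSpace X] {w : X → 𝓢(ℝ, F)}
    (hw : Continuous w) {K : Set X} (hK : IsCompact K) :
    ∃ C, ∀ s ∈ K, ∀ x, (1 + x ^ 2) * ‖w s x‖ ≤ C := by
  have hc : Continuous fun s =>
      SchwartzMap.seminorm ℝ 0 0 (w s) + SchwartzMap.seminorm ℝ 2 0 (w s) :=
    (((schwartz_withSeminorms ℝ ℝ F).continuous_seminorm (0, 0)).comp hw).add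
      (((schwartz_withSeminorms ℝ ℝ F).continuous_seminorm (2, 0)).comp hw)
  obtain ⟨C, hC⟩ := hK.bddAbove_image hc.continuousOn
  exact ⟨C, fun s hs x => (one_add_sq_mul_norm_le (w s) x).trans (hC ⟨s, hs, rfl⟩)⟩

theorem pinv_eq_of_hasDerivAt (H : 𝓢(ℝ, ℂ)) {f : ℝ → ℂ} (hd : ∀ y, HasDerivAt H (f y) y)
    (x : ℝ) : pinv f x = H x := by
  have hf : f = derivCLM ℝ ℂ H := funext fun y => by rw [derivCLM_apply, (hd y).deriv]
  have hH := H.tendsto_cocompact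
  rw [cocompact_eq_atBot_atTop, tendsto_sup] at hH
  exact _root_.pinv_eq_of_hasDerivAt hd (hf ▸ (derivCLM ℝ ℂ H).integrable) hH.1 hH.2 x

noncomputable def nonlocalCurrent (α : ℝ) (f : 𝓢(ℝ, ℂ)) : 𝓢(ℝ, ℂ) :=
  -mul f (conjNegCLM (derivCLM ℝ ℂ f)) - mul (derivCLM ℝ ℂ f) (conjNegCLM f)
    + ((α : ℂ) / 2) • mul (mul f (conjNegCLM f)) (mul f (conjNegCLM f))

theorem nonlocalCurrent_eq (α : ℝ) (f : 𝓢(ℝ, ℂ)) :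
    ⇑(nonlocalCurrent α f) = fun y => -(f y * conj (deriv f (-y))) - deriv f y * conj (f (-y))
      + α / 2 * (f y * conj (f (-y))) ^ 2 := by
  ext y
  simp only [nonlocalCurrent, add_apply, sub_apply, neg_apply, smul_apply, mul_apply,
    conjNegCLM_apply, derivCLM_apply, smul_eq_mul]
  ring

theorem hasDerivAt_nonlocalCurrent (α : ℝ) (f : 𝓢(ℝ, ℂ)) (ft : ℝ → ℂ)
    (heq : ∀ y, Complex.I * ft y + deriv (deriv f) y
      + α * f y ^ 2 * conj (deriv f (-y)) - (α ^ 2 / 2) * f y ^ 3 * conj (f (-y)) ^ 2 = 0)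
    (y : ℝ) : HasDerivAt (nonlocalCurrent α f)
      (Complex.I * (ft y * conj (f (-y)) + f y * conj (ft (-y)))) y := by
  have hrefl : -Complex.I * conj (ft (-y)) + conj (deriv (deriv f) (-y))
      + α * conj (f (-y)) ^ 2 * deriv f y - (α ^ 2 / 2) * conj (f (-y)) ^ 3 * f y ^ 2 = 0 := by
    simpa [map_ofNat] using congrArg conj (heq (-y))
  have hG := (f.hasDerivAt y).fun_mul (f.hasDerivAt (-y)).conj_neg
  rw [nonlocalCurrent_eq]
  refine (((f.hasDerivAt y).fun_mul (hasDerivAt_deriv f (-y)).conj_neg).fun_neg.fun_sub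
    ((hasDerivAt_deriv f y).fun_mul (f.hasDerivAt (-y)).conj_neg)).fun_add
    ((hG.fun_pow 2).const_mul ((α : ℂ) / 2)) |>.congr_deriv ?_
  linear_combination (-conj (f (-y)) : ℂ) * heq y + (f y : ℂ) * hrefl

end SchwartzMap

theorem hasDerivAt_setIntegral_mul {v vt w wt : ℝ → 𝓢(ℝ, ℂ)} (hv : Continuous v)
    (hvt : Continuous vt) (hw : Continuous w) (hwt : Continuous wt)
    (hv' : ∀ t y, HasDerivAt (fun τ => v τ y) (vt t y) t)
    (hw' : ∀ t y, HasDerivAt (fun τ => w τ y) (wt t y) t) (s : Set ℝ) (t : ℝ) :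
    HasDerivAt (fun τ => ∫ y in s, v τ y * w τ y)
      (∫ y in s, (vt t y * w t y + v t y * wt t y)) t := by
  have hK := isCompact_closedBall t 1
  obtain ⟨A, hA⟩ := SchwartzMap.exists_one_add_sq_mul_norm_le hvt hK
  obtain ⟨B, hB⟩ := SchwartzMap.exists_one_add_sq_mul_norm_le hw hK
  obtain ⟨A', hA'⟩ := SchwartzMap.exists_one_add_sq_mul_norm_le hv hK
  obtain ⟨B', hB'⟩ := SchwartzMap.exists_one_add_sq_mul_norm_le hwt hK
  have hbound : ∀ y, ∀ τ ∈ Metric.ball t 1,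
      ‖vt τ y * w τ y + v τ y * wt τ y‖ ≤ (A * B + A' * B') / (1 + y ^ 2) := by
    intro y τ hτ
    have hτ' := Metric.ball_subset_closedBall hτ
    rw [add_div]
    exact (norm_add_le _ _).trans (add_le_add
      (norm_mul_le_of_one_add_sq_mul_le (hA τ hτ' y) (hB τ hτ' y))
      (norm_mul_le_of_one_add_sq_mul_le (hA' τ hτ' y) (hB' τ hτ' y)))
  refine (hasDerivAt_integral_of_dominated_loc_of_deriv_le (Metric.ball_mem_nhds t one_pos)
    (Eventually.of_forall fun τ => ((v τ).continuous.mul (w τ).continuous).aestronglyMeasurable)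
    (SchwartzMap.mul (v t) (w t)).integrable.integrableOn
    (((vt t).continuous.mul (w t).continuous).add
      ((v t).continuous.mul (wt t).continuous)).aestronglyMeasurable
    (Eventually.of_forall hbound) ?_
    (Eventually.of_forall fun y τ _ => (hv' τ y).mul (hw' τ y))).2
  simpa only [div_eq_mul_inv] using (integrable_inv_one_add_sq.const_mul _).restrict

theorem hasDerivAt_pinv_mul_conj_neg {v vt : ℝ → 𝓢(ℝ, ℂ)} (hv : Continuous v)
    (hvt : Continuous vt) (hv' : ∀ t y, HasDerivAt (fun τ => v τ y) (vt t y) t) (t x : ℝ) :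
    HasDerivAt (fun τ => pinv (fun y => v τ y * conj (v τ (-y))) x)
      (pinv (fun y => vt t y * conj (v t (-y)) + v t y * conj (vt t (-y))) x) t := by
  have hw' : ∀ t y, HasDerivAt (fun τ => SchwartzMap.conjNegCLM (v τ) y)
      (SchwartzMap.conjNegCLM (vt t) y) t := fun t y => (hv' t (-y)).star
  have hint (s : Set ℝ) := hasDerivAt_setIntegral_mul hv hvt
    (SchwartzMap.conjNegCLM.continuous.comp hv) (SchwartzMap.conjNegCLM.continuous.comp hvt)
    hv' hw' s t
  exact ((hint (Set.Iic x)).sub (hint (Set.Ici x))).const_mul (1 / 2 : ℂ)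

section Gauge

variable (δ : ℂ) (f : 𝓢(ℝ, ℂ))

noncomputable def gaugeFactor (x : ℝ) : ℂ :=
  Complex.exp (δ * pinv (fun y => f y * conj (f (-y))) x)

theorem hasDerivAt_gaugeFactor (x : ℝ) :
    HasDerivAt (gaugeFactor δ f) (gaugeFactor δ f x * (δ * (f x * conj (f (-x))))) x :=
  ((hasDerivAt_pinv (SchwartzMap.mul f (SchwartzMap.conjNegCLM f)).integrable
    (SchwartzMap.mul f (SchwartzMap.conjNegCLM f)).continuous x).const_mul δ).cexp

theorem deriv_mul_gaugeFactor :
    deriv (fun y => f y * gaugeFactor δ f y) =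
      fun y => (deriv f y + δ * (f y * conj (f (-y))) * f y) * gaugeFactor δ f y :=
  funext fun y => ((f.hasDerivAt y).mul (hasDerivAt_gaugeFactor δ f y)).deriv.trans (by ring)

theorem deriv_deriv_mul_gaugeFactor (x : ℝ) :
    deriv (deriv (fun y => f y * gaugeFactor δ f y)) x =
      (deriv (deriv f) x
        + δ * (deriv f x * conj (f (-x)) - f x * conj (deriv f (-x))) * f x
        + 2 * δ * (f x * conj (f (-x))) * deriv f x
        + δ ^ 2 * (f x * conj (f (-x))) ^ 2 * f x) * gaugeFactor δ f x := by
  rw [deriv_mul_gaugeFactor]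
  have hG := ((f.hasDerivAt x).mul (f.hasDerivAt (-x)).conj_neg).const_mul δ
  exact (((SchwartzMap.hasDerivAt_deriv f x).add (hG.mul (f.hasDerivAt x))).mul
    (hasDerivAt_gaugeFactor δ f x)).deriv.trans (by simp only [Pi.mul_apply, Pi.add_apply]; ring)

theorem conj_gaugeFactor_neg (δ : ℝ) (x : ℝ) :
    conj (gaugeFactor δ f (-x)) = (gaugeFactor δ f x)⁻¹ := by
  have hsym : ∀ y, conj (f (-y) * conj (f (-(-y)))) = f y * conj (f (-y)) := fun y => by
    simp [mul_comm]
  rw [gaugeFactor, ← Complex.exp_conj, map_mul, Complex.conj_ofReal, conj_pinv_neg hsym,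
    mul_neg, Complex.exp_neg, gaugeFactor]

end Gauge

theorem hasDerivAt_gaugeFactor_time (δ : ℂ) {v vt : ℝ → 𝓢(ℝ, ℂ)} (hv : Continuous v)
    (hvt : Continuous vt) (hv' : ∀ t y, HasDerivAt (fun τ => v τ y) (vt t y) t) (t x : ℝ) :
    HasDerivAt (fun τ => gaugeFactor δ (v τ) x) (gaugeFactor δ (v t) x
      * (δ * pinv (fun y => vt t y * conj (v t (-y)) + v t y * conj (vt t (-y))) x)) t :=
  ((hasDerivAt_pinv_mul_conj_neg hv hvt hv' t x).const_mul δ).cexp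

theorem pinv_timeDeriv_mul_conj_neg (α : ℝ) (f : 𝓢(ℝ, ℂ)) (ft : ℝ → ℂ)
    (heq : ∀ y, Complex.I * ft y + deriv (deriv f) y
      - (α : ℂ) * f y ^ 2 * deriv (fun z => conj (f (-z))) y
      - ((α : ℂ) ^ 2 / 2) * f y ^ 3 * conj (f (-y)) ^ 2 = 0) (x : ℝ) :
    pinv (fun y => ft y * conj (f (-y)) + f y * conj (ft (-y))) x =
      -Complex.I * (-(f x * conj (deriv f (-x))) - deriv f x * conj (f (-x))
        + α / 2 * (f x * conj (f (-x))) ^ 2) := by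
  have heq' (y : ℝ) : Complex.I * ft y + deriv (deriv f) y + α * f y ^ 2 * conj (deriv f (-y))
      - (α ^ 2 / 2) * f y ^ 3 * conj (f (-y)) ^ 2 = 0 := by
    simpa [deriv_conj_neg f.differentiableAt] using heq y
  have hGt : (fun y => ft y * conj (f (-y)) + f y * conj (ft (-y))) =
      fun y => -Complex.I * (Complex.I * (ft y * conj (f (-y)) + f y * conj (ft (-y)))) := by
    ext y
    linear_combination (ft y * conj (f (-y)) + f y * conj (ft (-y))) * Complex.I_sq
  rw [hGt, pinv_const_mul, SchwartzMap.pinv_eq_of_hasDerivAt _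
    (SchwartzMap.hasDerivAt_nonlocalCurrent α f ft heq'), SchwartzMap.nonlocalCurrent_eq]

/-- If `v(t,·)` is a continuously differentiable curve of Schwartz functions (with time
derivative `vt`) solving `i vₜ + ∂ₓ²v − α v² ∂ₓ(v*) − (α²/2) v³ (v*)² = 0`, and `δ = −α/2`,
then `u = v · exp(δ ∂ₓ⁻¹(v v*))` solves the nonlocal derivative NLS
`i uₜ + ∂ₓ²u + α u u* ∂ₓu = 0`, where `w*(t,x) = conj(w(t,−x))`. -/
theorem stmt_9 (α δ : ℝ) (hδ : δ = -α / 2) (v vt : ℝ → SchwartzMap ℝ ℂ)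
    (hv : Continuous v) (hvt : Continuous vt)
    (hderiv : ∀ t x : ℝ, HasDerivAt (fun τ => v τ x) (vt t x) t)
    (heq : ∀ t x : ℝ,
      Complex.I * vt t x + deriv (deriv (fun y => v t y)) x
        - (α : ℂ) * (v t x) ^ 2 * deriv (fun y => (starRingEnd ℂ) (v t (-y))) x
        - ((α : ℂ) ^ 2 / 2) * (v t x) ^ 3 * ((starRingEnd ℂ) (v t (-x))) ^ 2 = 0)
    (u : ℝ → ℝ → ℂ)
    (hu : ∀ t x : ℝ, u t x =
      v t x * Complex.exp ((δ : ℂ) * pinv (fun y => v t y * (starRingEnd ℂ) (v t (-y))) x)) :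
    ∀ t x : ℝ,
      Complex.I * deriv (fun τ => u τ x) t + deriv (deriv (fun y => u t y)) x
        + (α : ℂ) * u t x * (starRingEnd ℂ) (u t (-x)) * deriv (fun y => u t y) x = 0 := by
  intro t x
  have hδ' : (δ : ℂ) = -α / 2 := by rw [hδ]; push_cast; ring
  have hspace : (fun y => u t y) = fun y => v t y * gaugeFactor δ (v t) y := funext (hu t)
  have htime : (fun τ => u τ x) = fun τ => v τ x * gaugeFactor δ (v τ) x :=
    funext fun τ => hu τ x
  have hux : u t x = v t x * gaugeFactor δ (v t) x := hu t x
  have hconj : conj (u t (-x)) = conj (v t (-x)) * (gaugeFactor δ (v t) x)⁻¹ := by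
    rw [hu, map_mul, ← conj_gaugeFactor_neg (v t) δ x, gaugeFactor]
  have hx := heq t x
  rw [deriv_conj_neg (v t).differentiableAt] at hx
  rw [htime, ((hderiv t x).fun_mul (hasDerivAt_gaugeFactor_time δ hv hvt hderiv t x)).deriv, hspace,
    deriv_deriv_mul_gaugeFactor, deriv_mul_gaugeFactor, hux, hconj,
    pinv_timeDeriv_mul_conj_neg α (v t) (vt t) (heq t) x, hδ']
  set E := gaugeFactor (-α / 2) (v t) x
  have hE : E * E⁻¹ = 1 := mul_inv_cancel₀ (Complex.exp_ne_zero _)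
  -- `hE` cancels the gauge factors of `u u*`, and `I_sq` turns `i · (-i H)` into `H`.
  linear_combination E * hx
    + α * v t x * conj (v t (-x)) * (deriv (v t) x - α / 2 * (v t x * conj (v t (-x))) * v t x)
      * E * hE
    + α / 2 * v t x * E * (-(v t x * conj (deriv (v t) (-x))) - deriv (v t) x * conj (v t (-x))
        + α / 2 * (v t x * conj (v t (-x))) ^ 2) * Complex.I_sq
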